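/- arXiv:2101.04888 — 5 statements merged into one kernel-verified Lean document; each statement's English description precedes it below -/
import Mathlib

section
/- Let k ≥ 1 and let Ω₁, …, Ω_k be nonempty finite sets, and let Ω = Ω₁ × ⋯ × Ω_k carry the uniform probability measure. For every map A : Ω → {1,…,k} and every subset S ⊆ Ω, the rejection-resampled variable Z satisfies |S|/|Ω| ≤ sqrt( k · Pr[Z ∈ S] ); equivalently, in counting form, (|S|/|Ω|)² ≤ k · (1/|Ω|) · Σ_{x ∈ Ω} |{v ∈ Ω_{A(x)} : x_{A(x)→v} ∈ S}| / |Ω_{A(x)}|. -/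
/-!
With `c x` the number of points of `S` on the line through `x` in direction `A x` and
`f x = c x / |Ω_{A x}|`, Cauchy–Schwarz gives `|S|² ≤ (∑_{x∈S} f x) (∑_{x∈S} 1 / f x)`.
The first factor is at most `|Ω| · Pr[Z ∈ S]`. In the second, the points with `A x = i`
contribute at most `∑_{x∈S} |Ω_i| / c_i x`, which is `|Ω_i|` times the number of lines in
direction `i` meeting `S`, hence at most `|Ω|`.
-/

open Finset Function

theorem sq_card_le_sum_mul_sum_inv {ι R : Type*} [Field R] [LinearOrder R]
    [IsStrictOrderedRing R] {s : Finset ι} {f : ι → R} (hf : ∀ i ∈ s, 0 < f i) :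
    (#s : R) ^ 2 ≤ (∑ i ∈ s, f i) * ∑ i ∈ s, (f i)⁻¹ := by
  simpa using sum_sq_le_sum_mul_sum_of_sq_le_mul s (r := fun _ ↦ (1 : R))
    (fun i hi ↦ (hf i hi).le) (fun i hi ↦ (inv_pos.2 (hf i hi)).le)
    (fun i hi ↦ by simp [mul_inv_cancel₀ (hf i hi).ne'])

section Lines

variable {ι : Type*} [Fintype ι] [DecidableEq ι] {Ω : ι → Type*} [∀ i, Fintype (Ω i)]

theorem sum_sum_eq_sum_sum_update {M : Type*} [AddCommMonoid M] (i : ι)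
    (g : (∀ i, Ω i) → Ω i → M) :
    ∑ x, ∑ v, g x v = ∑ z, ∑ w, g (update z i w) (z i) := by
  have swap : Involutive fun p : (∀ i, Ω i) × Ω i ↦ (update p.1 i p.2, p.1 i) := fun p ↦ by
    simp
  simp_rw [← Fintype.sum_prod_type']
  exact (Equiv.sum_comp (swap.toPerm _) fun p ↦ g p.1 p.2).symm

variable [∀ i, DecidableEq (Ω i)]

def lineCard (S : Finset (∀ i, Ω i)) (i : ι) (x : ∀ i, Ω i) : ℕ :=
  #{v | update x i v ∈ S}

variable {S : Finset (∀ i, Ω i)} {i : ι} {x : ∀ i, Ω i}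

@[simp]
theorem lineCard_update (v : Ω i) : lineCard S i (update x i v) = lineCard S i x := by
  simp [lineCard]

theorem lineCard_pos (hx : x ∈ S) : 0 < lineCard S i x :=
  card_pos.2 ⟨x i, by simpa using hx⟩

theorem sum_card_div_lineCard_le (S : Finset (∀ i, Ω i)) (i : ι) :
    ∑ x ∈ S, (Fintype.card (Ω i) : ℝ) / lineCard S i x ≤ Fintype.card (∀ i, Ω i) :=
  calc ∑ x ∈ S, (Fintype.card (Ω i) : ℝ) / lineCard S i x
      = ∑ x, ∑ _v : Ω i, if x ∈ S then (lineCard S i x : ℝ)⁻¹ else 0 := by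
        simp [sum_ite_mem, div_eq_mul_inv]
    _ = ∑ z, ∑ w : Ω i, if update z i w ∈ S then (lineCard S i z : ℝ)⁻¹ else 0 := by
        rw [sum_sum_eq_sum_sum_update i]; simp only [lineCard_update]
    _ = ∑ z, (lineCard S i z : ℝ) / lineCard S i z := by
        simp [← sum_filter, lineCard, div_eq_mul_inv]
    _ ≤ ∑ _z : ∀ i, Ω i, 1 := sum_le_sum fun z _ ↦ div_self_le_one _
    _ = Fintype.card (∀ i, Ω i) := by simp

theorem sum_card_div_lineCard_comp_le (S : Finset (∀ i, Ω i)) (A : (∀ i, Ω i) → ι) :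
    ∑ x ∈ S, (Fintype.card (Ω (A x)) : ℝ) / lineCard S (A x) x ≤
      Fintype.card ι * Fintype.card (∀ i, Ω i) :=
  calc ∑ x ∈ S, (Fintype.card (Ω (A x)) : ℝ) / lineCard S (A x) x
      = ∑ i, ∑ x ∈ S with A x = i, (Fintype.card (Ω i) : ℝ) / lineCard S i x := by
        rw [← sum_fiberwise S A]
        refine sum_congr rfl fun i _ ↦ sum_congr rfl fun x hx ↦ ?_
        rw [(mem_filter.1 hx).2]
    _ ≤ ∑ i, ∑ x ∈ S, (Fintype.card (Ω i) : ℝ) / lineCard S i x :=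
        sum_le_sum fun i _ ↦ sum_le_sum_of_subset_of_nonneg (filter_subset _ _)
          fun _ _ _ ↦ by positivity
    _ ≤ ∑ _i : ι, (Fintype.card (∀ i, Ω i) : ℝ) :=
        sum_le_sum fun i _ ↦ sum_card_div_lineCard_le S i
    _ = Fintype.card ι * Fintype.card (∀ i, Ω i) := by simp

theorem sq_card_le_card_mul_card_mul_sum_lineCard_div (S : Finset (∀ i, Ω i))
    (A : (∀ i, Ω i) → ι) :
    (#S : ℝ) ^ 2 ≤ Fintype.card ι * Fintype.card (∀ i, Ω i) *
      ∑ x, (lineCard S (A x) x : ℝ) / Fintype.card (Ω (A x)) := by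
  set f : (∀ i, Ω i) → ℝ := fun x ↦ (lineCard S (A x) x : ℝ) / Fintype.card (Ω (A x))
  have hf_pos : ∀ x ∈ S, 0 < f x := fun x hx ↦
    have : Nonempty (Ω (A x)) := ⟨x (A x)⟩
    div_pos (mod_cast lineCard_pos hx) (mod_cast Fintype.card_pos)
  calc (#S : ℝ) ^ 2
      ≤ (∑ x ∈ S, f x) * ∑ x ∈ S, (f x)⁻¹ := sq_card_le_sum_mul_sum_inv hf_pos
    _ ≤ (∑ x, f x) * (Fintype.card ι * Fintype.card (∀ i, Ω i)) := by
        gcongr ?_ * ?_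
        · exact sum_le_univ_sum_of_nonneg fun x ↦ by positivity
        · simpa only [f, inv_div] using sum_card_div_lineCard_comp_le S A
    _ = _ := mul_comm _ _

end Lines

theorem rejection_resampling_general
    {k : ℕ} (Ω : Fin k → Type)
    [∀ i, Fintype (Ω i)] [∀ i, DecidableEq (Ω i)]
    (A : (∀ i, Ω i) → Fin k) (S : Finset (∀ i, Ω i)) :
    ((S.card : ℝ) / (Fintype.card (∀ i, Ω i) : ℝ)) ^ 2 ≤
      (k : ℝ) * ((1 : ℝ) / (Fintype.card (∀ i, Ω i) : ℝ)) *
        ∑ x : ∀ i, Ω i,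
          ((Finset.univ.filter
              (fun v : Ω (A x) => Function.update x (A x) v ∈ S)).card : ℝ) /
            (Fintype.card (Ω (A x)) : ℝ) := by
  have counting := sq_card_le_card_mul_card_mul_sum_lineCard_div S A
  rw [Fintype.card_fin] at counting
  obtain hN | hN := eq_or_ne (Fintype.card (∀ i, Ω i) : ℝ) 0
  · rw [hN]; simp
  · rw [div_pow, div_le_iff₀ (by positivity)]
    refine counting.trans_eq ?_
    unfold lineCard
    field_simp

/-- **Rejection Resampling** (counting form). Let `Ω = Ω₁ × ⋯ × Ω_k` be a product of
nonempty finite sets with the uniform measure. For any map `A : Ω → Fin k` selecting a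
coordinate and any subset `S ⊆ Ω`, the rejection-resampled variable
`Z = X_{A(X) → V}` (with `X` uniform on `Ω` and `V` uniform on `Ω_{A(X)}`) satisfies
`(|S|/|Ω|)² ≤ k · Pr[Z ∈ S]`. -/
theorem rejection_resampling
    {k : ℕ} (hk : 1 ≤ k) (Ω : Fin k → Type)
    [∀ i, Fintype (Ω i)] [∀ i, Nonempty (Ω i)] [∀ i, DecidableEq (Ω i)]
    (A : (∀ i, Ω i) → Fin k) (S : Finset (∀ i, Ω i)) :
    ((S.card : ℝ) / (Fintype.card (∀ i, Ω i) : ℝ)) ^ 2 ≤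
      (k : ℝ) * ((1 : ℝ) / (Fintype.card (∀ i, Ω i) : ℝ)) *
        ∑ x : ∀ i, Ω i,
          ((Finset.univ.filter
              (fun v : Ω (A x) => Function.update x (A x) v ∈ S)).card : ℝ) /
            (Fintype.card (Ω (A x)) : ℝ) :=
  rejection_resampling_general Ω A S
end

section
/- Let D and V be finite types with V nonempty, and let Q : (D → V) → D be resampling-stable. Then for every function g : D → V, the number of pairs (f, v) ∈ (D → V) × V such that Function.update f (Q f) v = g is exactly |V|. -/
/-!
The fiber over `g` is parametrised by the value `w` that `f` had at the query point:
stability forces `Q f = Q g` and `v = g (Q g)`, so `f = Function.update g (Q g) w`,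
and conversely every such `f` is a preimage of `g` with `v = g (Q g)`.
-/

open Function

namespace Resampling

variable {D V : Type*} [DecidableEq D]

def IsStable (Q : (D → V) → D) : Prop :=
  ∀ (f : D → V) (v : V), Q (update f (Q f) v) = Q f

variable {Q : (D → V) → D}

theorem IsStable.query_eq_of_update_eq (hQ : IsStable Q) {f g : D → V} {v : V}
    (h : update f (Q f) v = g) : Q g = Q f :=
  h ▸ hQ f v

theorem IsStable.update_update_eq (hQ : IsStable Q) (g : D → V) (w : V) :
    update (update g (Q g) w) (Q (update g (Q g) w)) (g (Q g)) = g := by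
  rw [hQ g w, update_idem, update_eq_self]

theorem IsStable.eq_of_update_eq (hQ : IsStable Q) {f g : D → V} {v : V}
    (h : update f (Q f) v = g) : f = update g (Q g) (f (Q g)) ∧ v = g (Q g) := by
  rw [hQ.query_eq_of_update_eq h, ← h, update_idem, update_eq_self, update_self]
  exact ⟨rfl, rfl⟩

def IsStable.fiberEquiv (hQ : IsStable Q) (g : D → V) :
    {p : (D → V) × V // update p.1 (Q p.1) p.2 = g} ≃ V where
  toFun p := p.1.1 (Q g)
  invFun w := ⟨(update g (Q g) w, g (Q g)), hQ.update_update_eq g w⟩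
  left_inv := by
    rintro ⟨⟨f, v⟩, h⟩
    obtain ⟨hf, hv⟩ := hQ.eq_of_update_eq h
    ext1
    exact Prod.ext hf.symm hv.symm
  right_inv w := update_self _ _ _

end Resampling

theorem resampling_fiber_card_general
    {D V : Type} [Fintype D] [Fintype V] [DecidableEq D] [DecidableEq V]
    (Q : (D → V) → D)
    (hQ : ∀ (f : D → V) (v : V), Q (Function.update f (Q f) v) = Q f)
    (g : D → V) :
    (Finset.univ.filter
        (fun p : (D → V) × V => Function.update p.1 (Q p.1) p.2 = g)).card =
      Fintype.card V := by
  rw [← Fintype.card_subtype]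
  exact Fintype.card_congr (Resampling.IsStable.fiberEquiv hQ g)

/-- For a resampling-stable query map `Q : (D → V) → D`, every function `g : D → V`
has exactly `|V|` preimage pairs `(f, v)` under the resampling map
`(f, v) ↦ Function.update f (Q f) v`. -/
theorem resampling_fiber_card
    {D V : Type} [Fintype D] [Fintype V] [DecidableEq D] [DecidableEq V] [Nonempty V]
    (Q : (D → V) → D)
    (hQ : ∀ (f : D → V) (v : V), Q (Function.update f (Q f) v) = Q f)
    (g : D → V) :
    (Finset.univ.filter
        (fun p : (D → V) × V => Function.update p.1 (Q p.1) p.2 = g)).card =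
      Fintype.card V :=
  resampling_fiber_card_general Q hQ g
end

section
/- Let D and V be finite nonempty types, let d : D → (D → V) → {0,1} be any indicator function, and for each α ∈ D let Q_α : (D → V) → D be resampling-stable. Suppose that for every function g : D → V, the number of α ∈ D with d(α, g) = 1 is at most ε₁·|D|. Then, for α sampled uniformly from D, f sampled uniformly from the functions D → V, and v sampled uniformly from V, all independently, E[ d(α, Function.update f (Q_α f) v) ] = E_{α, g}[ d(α, g) ] ≤ ε₁, where in the middle expression g is uniform over the functions D → V. -/
/-!
Resampling the answer at the queried point is a measure-preserving change of variables:
since `Q` does not move when the value at `Q f` is overwritten, the map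
`(f, v) ↦ (update f (Q f) v, f (Q f))` is an involution of `(D → V) × V`. Hence
`update f (Q f) v` is uniform when `f` and `v` are, and the expectation of `d` is unchanged;
the bound by `ε₁` is the per-function counting hypothesis averaged over `g`.
-/

open Finset Function

section Resampling

variable {ι β : Type*} [DecidableEq ι]

def resample (Q : (ι → β) → ι) (p : (ι → β) × β) : (ι → β) × β :=
  (update p.1 (Q p.1) p.2, p.1 (Q p.1))

theorem resample_involutive {Q : (ι → β) → ι}
    (hQ : ∀ f v, Q (update f (Q f) v) = Q f) : Involutive (resample Q) := by
  rintro ⟨f, v⟩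
  simp [resample, hQ]

theorem sum_sum_comp_update_query [Fintype ι] [Fintype β] {M : Type*} [AddCommMonoid M]
    {Q : (ι → β) → ι} (hQ : ∀ f v, Q (update f (Q f) v) = Q f) (φ : (ι → β) → M) :
    ∑ f, ∑ v, φ (update f (Q f) v) = Fintype.card β • ∑ g, φ g :=
  calc ∑ f, ∑ v, φ (update f (Q f) v)
      = ∑ p : (ι → β) × β, φ (resample Q p).1 :=
        (Fintype.sum_prod_type fun p => φ (resample Q p).1).symm
    _ = ∑ p : (ι → β) × β, φ p.1 :=
      (resample_involutive hQ).bijective.sum_comp fun p => φ p.1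
    _ = Fintype.card β • ∑ g, φ g := by
      rw [Fintype.sum_prod_type, smul_sum]
      simp only [sum_const, card_univ]

end Resampling

theorem Finset.sum_eq_card_filter_eq_one_of_zero_or_one {ι R : Type*}
    [AddCommMonoidWithOne R] [DecidableEq R] (s : Finset ι) (f : ι → R)
    (hf : ∀ i ∈ s, f i = 0 ∨ f i = 1) : ∑ i ∈ s, f i = #{i ∈ s | f i = 1} := by
  rw [← sum_boole]
  refine sum_congr rfl fun i hi => ?_
  rcases hf i hi with h | h <;> simp [h]

theorem resampled_problematic_expectation_general
    {D V : Type} [Fintype D] [Fintype V] [DecidableEq D]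
    [Nonempty D] [Nonempty V]
    (ε₁ : ℝ) (d : D → (D → V) → ℝ)
    (hd01 : ∀ (α : D) (g : D → V), d α g = 0 ∨ d α g = 1)
    (Q : D → (D → V) → D)
    (hQ : ∀ (α : D) (f : D → V) (v : V),
      Q α (Function.update f (Q α f) v) = Q α f)
    (hcount : ∀ g : D → V,
      ((Finset.univ.filter (fun α : D => d α g = 1)).card : ℝ) ≤
        ε₁ * (Fintype.card D : ℝ)) :
    (∑ α : D, ∑ f : D → V, ∑ v : V, d α (Function.update f (Q α f) v)) /
        ((Fintype.card D : ℝ) * (Fintype.card (D → V) : ℝ) * (Fintype.card V : ℝ)) =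
      (∑ α : D, ∑ g : D → V, d α g) /
        ((Fintype.card D : ℝ) * (Fintype.card (D → V) : ℝ)) ∧
    (∑ α : D, ∑ g : D → V, d α g) /
        ((Fintype.card D : ℝ) * (Fintype.card (D → V) : ℝ)) ≤ ε₁ := by
  have hresample : ∑ α, ∑ f, ∑ v, d α (update f (Q α f) v)
      = Fintype.card V * ∑ α, ∑ g, d α g := by
    rw [mul_sum]
    exact sum_congr rfl fun α _ => by
      rw [sum_sum_comp_update_query (hQ α), nsmul_eq_mul]
  have hbound : ∑ α, ∑ g, d α g ≤ ε₁ * Fintype.card D * Fintype.card (D → V) :=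
    calc ∑ α, ∑ g, d α g = ∑ g, (#{α | d α g = 1} : ℝ) := by
          rw [sum_comm]
          exact sum_congr rfl fun g _ =>
            sum_eq_card_filter_eq_one_of_zero_or_one _ _ fun α _ => hd01 α g
      _ ≤ ∑ _g : D → V, ε₁ * Fintype.card D := sum_le_sum fun g _ => hcount g
      _ = ε₁ * Fintype.card D * Fintype.card (D → V) := by
          rw [sum_const, card_univ, nsmul_eq_mul, mul_comm]
  refine ⟨?_, ?_⟩
  · rw [hresample]
    field_simp
  · rw [div_le_iff₀ (by positivity)]
    linarith

/-- Expected fraction of problematic points after resampling. If every function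
`g : D → V` has at most an `ε₁` fraction of problematic points (`d α g = 1`), and each
query map `Q α` is resampling-stable, then the expectation of
`d α (Function.update f (Q α f) v)` over uniform independent `α`, `f`, `v` equals the
expectation of `d α g` over uniform `(α, g)`, and is at most `ε₁`. -/
theorem resampled_problematic_expectation
    {D V : Type} [Fintype D] [Fintype V] [DecidableEq D] [DecidableEq V]
    [Nonempty D] [Nonempty V]
    (ε₁ : ℝ) (d : D → (D → V) → ℝ)
    (hd01 : ∀ (α : D) (g : D → V), d α g = 0 ∨ d α g = 1)
    (Q : D → (D → V) → D)
    (hQ : ∀ (α : D) (f : D → V) (v : V),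
      Q α (Function.update f (Q α f) v) = Q α f)
    (hcount : ∀ g : D → V,
      ((Finset.univ.filter (fun α : D => d α g = 1)).card : ℝ) ≤
        ε₁ * (Fintype.card D : ℝ)) :
    (∑ α : D, ∑ f : D → V, ∑ v : V, d α (Function.update f (Q α f) v)) /
        ((Fintype.card D : ℝ) * (Fintype.card (D → V) : ℝ) * (Fintype.card V : ℝ)) =
      (∑ α : D, ∑ g : D → V, d α g) /
        ((Fintype.card D : ℝ) * (Fintype.card (D → V) : ℝ)) ∧
    (∑ α : D, ∑ g : D → V, d α g) /
        ((Fintype.card D : ℝ) * (Fintype.card (D → V) : ℝ)) ≤ ε₁ :=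
  resampled_problematic_expectation_general ε₁ d hd01 Q hQ hcount
end

section
/- Let D and H be finite nonempty sets, let τ be a positive integer, and let ε₁ be a real number with 0 < ε₁ ≤ 1 and τ·ε₁^{1/4} ≤ 1. Let Q : D → H → Finset D satisfy |Q(α, h)| ≤ τ for all α, h; let d : D → H → {0,1} and, for each j ∈ {1,…,τ}, let D^j : D → H → ℝ≥0. Assume (i) Σ_{α,h} d(α,h) ≤ ε₁·|D|·|H|, and (ii) for every j, Σ_{α,h} D^j(α,h) ≤ ε₁·|D|·|H|. Call α robust for h if d(α,h) = 0 and D^j(α,h) ≤ ε₁^{1/2} for every j ∈ {1,…,τ}; call a pair (α', h) good if every α with α' ∈ Q(α,h) is robust for h and |{α : α' ∈ Q(α,h)}| ≤ ε₁^{-1/4}, and bad otherwise. Then the number of bad pairs (α', h) ∈ D × H is at most 3·τ·ε₁^{1/4}·|D|·|H|; that is, a uniformly random pair (α', h) is bad with probability at most 3τ·ε₁^{1/4}. -/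
/-!
A bad pair `(α', h)` is either queried by some input `α` that is not robust for `h`, or
queried by more than `ε₁^{-1/4}` inputs. By Markov's inequality applied to `d` and to each
`D^j`, at most `(ε₁ + τ ε₁^{1/2})|D||H|` pairs `(α, h)` are not robust, and each of them queries
at most `τ` points, which bounds the pairs of the first kind. Double counting gives
`∑_{(α', h)} #{α | α' ∈ Q α h} = ∑_{(α, h)} #(Q α h) ≤ τ|D||H|`, so Markov bounds the pairs of the
second kind by `τ ε₁^{1/4}|D||H|`. Writing `ε₁ = a⁴`, the hypothesis `τ a ≤ 1` makes each of the
three contributions at most `τ a |D||H|`.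
-/

open Finset

section Markov

variable {ι : Type*} [Fintype ι]

theorem mul_card_le_sum_of_le {f : ι → ℝ} (hf : ∀ i, 0 ≤ f i) {s : Finset ι} {t : ℝ}
    (hs : ∀ i ∈ s, t ≤ f i) : t * #s ≤ ∑ i, f i :=
  calc t * #s = #s • t := by rw [nsmul_eq_mul, mul_comm]
    _ ≤ ∑ i ∈ s, f i := card_nsmul_le_sum s f t hs
    _ ≤ ∑ i, f i := sum_le_sum_of_subset_of_nonneg (subset_univ s) fun i _ _ => hf i

theorem card_filter_lt_le_div {f : ι → ℝ} (hf : ∀ i, 0 ≤ f i) {t B : ℝ} (ht : 0 < t)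
    (hB : ∑ i, f i ≤ B) [DecidablePred fun i => t < f i] :
    (#{i | t < f i} : ℝ) ≤ B / t := by
  rw [le_div_iff₀ ht, mul_comm]
  exact (mul_card_le_sum_of_le hf fun i hi => (mem_filter.1 hi).2.le).trans hB

theorem card_filter_ne_zero_le_sum {f : ι → ℝ} (hf : ∀ i, f i = 0 ∨ f i = 1)
    [DecidablePred fun i => f i ≠ 0] : (#{i | f i ≠ 0} : ℝ) ≤ ∑ i, f i := by
  have hf0 : ∀ i, 0 ≤ f i := fun i => by rcases hf i with h | h <;> simp [h]
  simpa using mul_card_le_sum_of_le hf0 (t := 1) fun i hi =>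
    ((hf i).resolve_left (mem_filter.1 hi).2).ge

theorem card_filter_not_robust_le {τ : ℕ} {d : ι → ℝ} {g : Fin τ → ι → ℝ}
    (hd01 : ∀ i, d i = 0 ∨ d i = 1) (hg0 : ∀ j i, 0 ≤ g j i) {s B : ℝ} (hs : 0 < s)
    (hd : ∑ i, d i ≤ B) (hg : ∀ j, ∑ i, g j i ≤ B)
    [DecidablePred fun i => ¬(d i = 0 ∧ ∀ j, g j i ≤ s)] :
    (#{i | ¬(d i = 0 ∧ ∀ j, g j i ≤ s)} : ℝ) ≤ B + τ * (B / s) := by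
  classical
  have hsub : ({i | ¬(d i = 0 ∧ ∀ j, g j i ≤ s)} : Finset ι) ⊆
      ({i | d i ≠ 0} : Finset ι) ∪ univ.biUnion fun j => ({i | s < g j i} : Finset ι) := by
    intro i hi
    simp only [not_and_or, not_forall, not_le, mem_filter, mem_univ, true_and] at hi
    simpa [mem_union, mem_biUnion] using hi
  calc (#{i | ¬(d i = 0 ∧ ∀ j, g j i ≤ s)} : ℝ)
      ≤ #{i | d i ≠ 0} + ∑ j, (#{i | s < g j i} : ℝ) := by
        have := (card_le_card hsub).trans <| (card_union_le _ _).trans <|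
          Nat.add_le_add_left (card_biUnion_le (s := univ)) _
        exact_mod_cast this
    _ ≤ B + ∑ _j : Fin τ, B / s := by
        gcongr with j
        · exact (card_filter_ne_zero_le_sum hd01).trans hd
        · exact card_filter_lt_le_div (hg0 j) hs (hg j)
    _ = B + τ * (B / s) := by simp

end Markov

section Queries

variable {D H : Type*} [Fintype D] [Fintype H] [DecidableEq D] (Q : D → H → Finset D)

theorem sum_card_filter_mem_queries :
    ∑ p : D × H, #{α | p.1 ∈ Q α p.2} = ∑ p : D × H, #(Q p.1 p.2) := by
  simp only [Fintype.sum_prod_type]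
  rw [sum_comm, sum_comm (f := fun α h => #(Q α h))]
  refine sum_congr rfl fun h _ => ?_
  have := sum_card_bipartiteAbove_eq_sum_card_bipartiteBelow (fun α α' => α' ∈ Q α h)
    (s := univ) (t := univ)
  simpa [bipartiteAbove, bipartiteBelow, filter_mem_eq_inter] using this.symm

variable {Q} {τ : ℕ} (hQ : ∀ α h, #(Q α h) ≤ τ)
include hQ

theorem card_filter_exists_query_le (P : D → H → Prop) [DecidableEq H]
    [DecidablePred fun q : D × H => P q.1 q.2]
    [DecidablePred fun p : D × H => ∃ α, p.1 ∈ Q α p.2 ∧ P α p.2] :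
    #{p : D × H | ∃ α, p.1 ∈ Q α p.2 ∧ P α p.2} ≤ #{q : D × H | P q.1 q.2} * τ := by
  refine (card_le_card ?_).trans <| card_biUnion_le_card_mul _
    (fun q : D × H => (Q q.1 q.2).image (·, q.2)) τ fun q _ => card_image_le.trans (hQ _ _)
  rintro ⟨α', h⟩ hp
  obtain ⟨α, hmem, hP⟩ := (mem_filter.1 hp).2
  exact mem_biUnion.2 ⟨(α, h), mem_filter.2 ⟨mem_univ _, hP⟩, mem_image.2 ⟨α', hmem, rfl⟩⟩

theorem card_filter_lt_card_queriers_le {t : ℝ} (ht : 0 < t)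
    [DecidablePred fun p : D × H => t < #{α | p.1 ∈ Q α p.2}] :
    (#{p : D × H | t < #{α | p.1 ∈ Q α p.2}} : ℝ) ≤ τ * Fintype.card D * Fintype.card H / t := by
  refine card_filter_lt_le_div (fun _ => Nat.cast_nonneg _) ht ?_
  have hsum := (sum_card_filter_mem_queries Q).trans_le <|
    sum_le_card_nsmul _ _ τ fun p _ => hQ p.1 p.2
  rw [card_univ, Fintype.card_prod, smul_eq_mul] at hsum
  calc ∑ p : D × H, (#{α | p.1 ∈ Q α p.2} : ℝ)
      ≤ (Fintype.card D * Fintype.card H * τ : ℕ) := by exact_mod_cast hsum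
    _ = τ * Fintype.card D * Fintype.card H := by push_cast; ring

end Queries

open Classical in
theorem good_pair_probability_general
    {D H : Type} [Fintype D] [Fintype H] [DecidableEq D]
    (τ : ℕ)
    (ε₁ : ℝ) (hε0 : 0 < ε₁) (hε1 : ε₁ ≤ 1)
    (hτε : (τ : ℝ) * ε₁ ^ ((1 : ℝ) / 4) ≤ 1)
    (Q : D → H → Finset D) (hQcard : ∀ (α : D) (h : H), (Q α h).card ≤ τ)
    (d : D → H → ℝ) (hd01 : ∀ (α : D) (h : H), d α h = 0 ∨ d α h = 1)
    (Dj : Fin τ → D → H → ℝ) (hDj0 : ∀ (j : Fin τ) (α : D) (h : H), 0 ≤ Dj j α h)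
    (hd : (∑ α : D, ∑ h : H, d α h) ≤ ε₁ * (Fintype.card D : ℝ) * (Fintype.card H : ℝ))
    (hDj : ∀ j : Fin τ,
      (∑ α : D, ∑ h : H, Dj j α h) ≤ ε₁ * (Fintype.card D : ℝ) * (Fintype.card H : ℝ)) :
    ((Finset.univ.filter
        (fun p : D × H =>
          ¬ ((∀ α : D, p.1 ∈ Q α p.2 →
                (d α p.2 = 0 ∧ ∀ j : Fin τ, Dj j α p.2 ≤ ε₁ ^ ((1 : ℝ) / 2))) ∧
             ((Finset.univ.filter (fun α : D => p.1 ∈ Q α p.2)).card : ℝ) ≤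
                (ε₁ ^ ((1 : ℝ) / 4))⁻¹))).card : ℝ) ≤
      3 * (τ : ℝ) * ε₁ ^ ((1 : ℝ) / 4) * (Fintype.card D : ℝ) * (Fintype.card H : ℝ) := by
  set a := ε₁ ^ ((1 : ℝ) / 4) with ha
  have ha0 : 0 < a := by positivity
  have ha1 : a ≤ 1 := Real.rpow_le_one hε0.le hε1 (by norm_num)
  have hε₁ : ε₁ = a ^ 4 := by
    rw [ha, ← Real.rpow_natCast, ← Real.rpow_mul hε0.le]; norm_num
  have hsqrt : ε₁ ^ ((1 : ℝ) / 2) = a ^ 2 := by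
    rw [ha, ← Real.rpow_natCast, ← Real.rpow_mul hε0.le]; norm_num
  rw [hsqrt]
  have hnonrobust := card_filter_not_robust_le (fun q : D × H => hd01 q.1 q.2)
    (fun j q => hDj0 j q.1 q.2) (pow_pos ha0 2) ((Fintype.sum_prod_type' _).trans_le hd)
    fun j => (Fintype.sum_prod_type' _).trans_le (hDj j)
  have hqueried := card_filter_exists_query_le hQcard
    fun α h => ¬(d α h = 0 ∧ ∀ j, Dj j α h ≤ a ^ 2)
  have hcrowded := card_filter_lt_card_queriers_le hQcard (inv_pos.2 ha0)
  refine (Nat.cast_le.2 <| (card_le_card ?_).trans <| card_union_le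
    {p : D × H | ∃ α, p.1 ∈ Q α p.2 ∧ ¬(d α p.2 = 0 ∧ ∀ j, Dj j α p.2 ≤ a ^ 2)}
    {p : D × H | a⁻¹ < (#{α | p.1 ∈ Q α p.2} : ℝ)}).trans ?_
  · intro p hp
    simp only [mem_union, mem_filter, mem_univ, true_and] at hp ⊢
    contrapose! hp
    exact hp
  push_cast
  calc _ ≤ (ε₁ * Fintype.card D * Fintype.card H
          + τ * (ε₁ * Fintype.card D * Fintype.card H / a ^ 2)) * τ
          + τ * Fintype.card D * Fintype.card H / a⁻¹ := by
        gcongr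
        exact (Nat.cast_le.2 hqueried).trans (by push_cast; gcongr)
    _ = τ * a * Fintype.card D * Fintype.card H * (a ^ 3 + τ * a + 1) := by
        rw [hε₁]; field_simp
    _ ≤ τ * a * Fintype.card D * Fintype.card H * 3 := by
        gcongr
        nlinarith [pow_le_one₀ ha0.le ha1 (n := 3)]
    _ = _ := by ring

open Classical in
/-- A random point-function pair is good with high probability. With `Q α h` the set of
at most `τ` points queried on input `α` under oracle `h`, `d α h ∈ {0,1}` indicating
that `α` is problematic, and `Dj j α h` the probability that `α` becomes problematic
when the answer to the `j`-th query is resampled, assume both `d` and each `Dj j`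
have average at most `ε₁`. Call `α` robust for `h` if `d α h = 0` and
`Dj j α h ≤ ε₁^{1/2}` for all `j`, and call `(α', h)` good if every `α` querying `α'`
is robust for `h` and at most `ε₁^{-1/4}` many `α` query `α'`. Then the number of bad
pairs is at most `3τ·ε₁^{1/4}·|D|·|H|`. -/
theorem good_pair_probability
    {D H : Type} [Fintype D] [Fintype H] [DecidableEq D] [DecidableEq H]
    [Nonempty D] [Nonempty H]
    (τ : ℕ) (hτ : 0 < τ)
    (ε₁ : ℝ) (hε0 : 0 < ε₁) (hε1 : ε₁ ≤ 1)
    (hτε : (τ : ℝ) * ε₁ ^ ((1 : ℝ) / 4) ≤ 1)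
    (Q : D → H → Finset D) (hQcard : ∀ (α : D) (h : H), (Q α h).card ≤ τ)
    (d : D → H → ℝ) (hd01 : ∀ (α : D) (h : H), d α h = 0 ∨ d α h = 1)
    (Dj : Fin τ → D → H → ℝ) (hDj0 : ∀ (j : Fin τ) (α : D) (h : H), 0 ≤ Dj j α h)
    (hd : (∑ α : D, ∑ h : H, d α h) ≤ ε₁ * (Fintype.card D : ℝ) * (Fintype.card H : ℝ))
    (hDj : ∀ j : Fin τ,
      (∑ α : D, ∑ h : H, Dj j α h) ≤ ε₁ * (Fintype.card D : ℝ) * (Fintype.card H : ℝ)) :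
    ((Finset.univ.filter
        (fun p : D × H =>
          ¬ ((∀ α : D, p.1 ∈ Q α p.2 →
                (d α p.2 = 0 ∧ ∀ j : Fin τ, Dj j α p.2 ≤ ε₁ ^ ((1 : ℝ) / 2))) ∧
             ((Finset.univ.filter (fun α : D => p.1 ∈ Q α p.2)).card : ℝ) ≤
                (ε₁ ^ ((1 : ℝ) / 4))⁻¹))).card : ℝ) ≤
      3 * (τ : ℝ) * ε₁ ^ ((1 : ℝ) / 4) * (Fintype.card D : ℝ) * (Fintype.card H : ℝ) :=
  good_pair_probability_general τ ε₁ hε0 hε1 hτε Q hQcard d hd01 Dj hDj0 hd hDj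
end

section
/- Let n and l be positive integers with l ≥ n, let p be a real number with 0 ≤ p ≤ 1/4, let H be a finite nonempty set, let δ ≥ 0, and let G ⊆ H satisfy |H \ G| ≤ δ·|H|. For each h ∈ H and each i ∈ {1,…,l}, let B(h, i) ⊆ {0,1}ⁿ be a set such that |B(h, i)| ≤ p·2ⁿ whenever h ∈ G. Then, for R = (R₁,…,R_l) sampled uniformly from ({0,1}ⁿ)^l and h sampled uniformly from H, independently, the probability that h ∉ G or that there exists m ∈ {0,1}ⁿ with m ⊕ R_i ∈ B(h, i) for every i ∈ {1,…,l} is at most δ + 2^{-n}. -/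
/-!
Union bound. Pairs with `h ∉ G` have density at most `δ`. For a fixed `h ∈ G` and a fixed
message `m`, the map `x ↦ m ⊕ x` is a bijection of `{0,1}ⁿ`, so the `R` with `m ⊕ Rᵢ ∈ B h i`
for all `i` number `∏ᵢ |B h i| ≤ (p 2ⁿ)^l`, i.e. they have density at most `p^l`. Summing over
the `2ⁿ` messages gives density at most `2ⁿ p^l ≤ 2ⁿ 4⁻ⁿ = 2⁻ⁿ`.
-/

open Finset

theorem card_filter_exists_le_sum {M α : Type*} [Fintype M] [Fintype α] (P : M → α → Prop)
    [∀ m, DecidablePred (P m)] [DecidablePred fun x => ∃ m, P m x] :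
    #{x | ∃ m, P m x} ≤ ∑ m, #{x | P m x} := by
  classical
  calc #{x | ∃ m, P m x} = #(univ.biUnion fun m => {x | P m x}) := by
        congr 1; ext x; simp
    _ ≤ _ := card_biUnion_le

theorem card_filter_forall_mem_comp {ι V : Type*} [Fintype ι] [DecidableEq ι] [Fintype V]
    [DecidableEq V] {f : V → V} (hf : f.Bijective) (s : ι → Finset V) :
    #{R : ι → V | ∀ i, f (R i) ∈ s i} = ∏ i, #(s i) := by
  have hpi : ({R : ι → V | ∀ i, f (R i) ∈ s i} : Finset _) =
      Fintype.piFinset fun i => {v | f v ∈ s i} := by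
    ext R; simp
  rw [hpi, Fintype.card_piFinset]
  refine prod_congr rfl fun i _ => ?_
  exact card_bij (fun v _ => f v) (by simp) (fun a _ b _ h => hf.1 h) fun b hb => by
    obtain ⟨a, rfl⟩ := hf.2 b
    exact ⟨a, by simpa using hb, rfl⟩

theorem card_filter_exists_forall_mem_comp_le {M ι V : Type*} [Fintype M] [Fintype ι]
    [DecidableEq ι] [Fintype V] [DecidableEq V] {f : M → V → V} (hf : ∀ m, (f m).Bijective)
    (s : ι → Finset V) [DecidablePred fun R : ι → V => ∃ m, ∀ i, f m (R i) ∈ s i] :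
    #{R : ι → V | ∃ m, ∀ i, f m (R i) ∈ s i} ≤ Fintype.card M * ∏ i, #(s i) :=
  calc #{R : ι → V | ∃ m, ∀ i, f m (R i) ∈ s i}
      ≤ ∑ m, #{R : ι → V | ∀ i, f m (R i) ∈ s i} := card_filter_exists_le_sum _
    _ = Fintype.card M * ∏ i, #(s i) := by
      simp only [card_filter_forall_mem_comp (hf _), sum_const, card_univ, smul_eq_mul]

theorem pi_xor_left_involutive {n : ℕ} (m : Fin n → Bool) :
    Function.Involutive fun x : Fin n → Bool => fun j => xor (m j) (x j) :=
  fun x => funext fun j => by simp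

theorem two_pow_mul_pow_le_inv_two_pow {n l : ℕ} {p : ℝ} (hp0 : 0 ≤ p) (hp4 : p ≤ 1 / 4)
    (hln : n ≤ l) : 2 ^ n * p ^ l ≤ ((2 : ℝ) ^ n)⁻¹ :=
  calc (2 : ℝ) ^ n * p ^ l ≤ 2 ^ n * (1 / 4) ^ n := by
        gcongr
        exact (pow_le_pow_left₀ hp0 hp4 l).trans
          (pow_le_pow_of_le_one (by norm_num) (by norm_num) hln)
    _ = (2 ^ n)⁻¹ := by
        rw [← mul_pow, ← inv_pow]; norm_num

theorem card_filter_exists_forall_xor_mem_le {n l : ℕ} {p : ℝ} (hp0 : 0 ≤ p)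
    (hp4 : p ≤ 1 / 4) (hln : n ≤ l) (s : Fin l → Finset (Fin n → Bool))
    (hs : ∀ i, (#(s i) : ℝ) ≤ p * 2 ^ n) :
    (#{R : Fin l → Fin n → Bool |
        ∃ m : Fin n → Bool, ∀ i, (fun j => xor (m j) (R i j)) ∈ s i} : ℝ)
      ≤ ((2 : ℝ) ^ n)⁻¹ * Fintype.card (Fin l → Fin n → Bool) := by
  have hcount := card_filter_exists_forall_mem_comp_le
    (fun m : Fin n → Bool => (pi_xor_left_involutive m).bijective) s
  rw [Fintype.card_fun, Fintype.card_bool, Fintype.card_fin] at hcount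
  calc _ ≤ 2 ^ n * ∏ i, (#(s i) : ℝ) := by exact_mod_cast hcount
    _ ≤ 2 ^ n * (p * 2 ^ n) ^ l := by
        gcongr
        exact (prod_le_prod (fun _ _ => by positivity) fun i _ => hs i).trans (by simp)
    _ = (2 ^ n * p ^ l) * (2 ^ n) ^ l := by ring
    _ ≤ ((2 : ℝ) ^ n)⁻¹ * Fintype.card (Fin l → Fin n → Bool) := by
        simp only [Fintype.card_pi, Fintype.card_bool, Fintype.card_fin, prod_const, card_univ]
        push_cast
        gcongr
        exact two_pow_mul_pow_le_inv_two_pow hp0 hp4 hln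

theorem card_filter_not_mem_or_le {α β : Type*} [Fintype α] [Fintype β] [DecidableEq β]
    (G : Finset β) (Q : α → β → Prop) [∀ b, DecidablePred (Q · b)]
    [DecidablePred fun x : α × β => x.2 ∉ G ∨ Q x.1 x.2] {δ ε : ℝ} (hε : 0 ≤ ε)
    (hG : (#(univ \ G) : ℝ) ≤ δ * Fintype.card β)
    (hQ : ∀ b ∈ G, (#{a | Q a b} : ℝ) ≤ ε * Fintype.card α) :
    (#{x : α × β | x.2 ∉ G ∨ Q x.1 x.2} : ℝ) ≤ (δ + ε) * Fintype.card (α × β) := by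
  classical
  have hfiber : ∀ b, (#{a | b ∉ G ∨ Q a b} : ℝ)
      ≤ (if b ∈ univ \ G then (Fintype.card α : ℝ) else 0) + ε * Fintype.card α := by
    intro b
    by_cases hb : b ∈ G
    · simpa [hb] using hQ b hb
    · rw [if_pos (mem_sdiff.2 ⟨mem_univ _, hb⟩)]
      have hle : (#{a | b ∉ G ∨ Q a b} : ℝ) ≤ Fintype.card α := by
        exact_mod_cast card_le_univ _
      linarith [show 0 ≤ ε * Fintype.card α by positivity]
  calc (#{x : α × β | x.2 ∉ G ∨ Q x.1 x.2} : ℝ)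
      = ∑ b, (#{a | b ∉ G ∨ Q a b} : ℝ) := by
        simp only [card_filter, Fintype.sum_prod_type_right]; push_cast; rfl
    _ ≤ ∑ b, ((if b ∈ univ \ G then (Fintype.card α : ℝ) else 0) + ε * Fintype.card α) :=
        sum_le_sum fun b _ => hfiber b
    _ = #(univ \ G) * Fintype.card α + Fintype.card β * (ε * Fintype.card α) := by
        rw [sum_add_distrib, sum_ite_mem, univ_inter, sum_const, sum_const, card_univ]
        simp
    _ ≤ (δ + ε) * Fintype.card (α × β) := by
        rw [Fintype.card_prod]; push_cast
        nlinarith [show (0 : ℝ) ≤ Fintype.card α by positivity]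

theorem critical_set_probability_general
    (n l : ℕ) (hln : n ≤ l)
    (p : ℝ) (hp0 : 0 ≤ p) (hp4 : p ≤ 1 / 4)
    {H : Type} [Fintype H] [DecidableEq H] [Nonempty H]
    (δ : ℝ)
    (G : Finset H)
    (hG : ((Finset.univ \ G).card : ℝ) ≤ δ * (Fintype.card H : ℝ))
    (B : H → Fin l → Finset (Fin n → Bool))
    (hB : ∀ h ∈ G, ∀ i : Fin l, ((B h i).card : ℝ) ≤ p * 2 ^ n) :
    ((Finset.univ.filter
        (fun Rh : (Fin l → (Fin n → Bool)) × H =>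
          Rh.2 ∉ G ∨
            ∃ m : Fin n → Bool, ∀ i : Fin l,
              (fun j : Fin n => xor (m j) (Rh.1 i j)) ∈ B Rh.2 i)).card : ℝ) /
        (Fintype.card ((Fin l → (Fin n → Bool)) × H) : ℝ) ≤
      δ + ((2 : ℝ) ^ n)⁻¹ := by
  rw [div_le_iff₀ (by exact_mod_cast Fintype.card_pos)]
  have hbound := card_filter_not_mem_or_le (ε := ((2 : ℝ) ^ n)⁻¹) G _ (by positivity) hG
    fun h hh => card_filter_exists_forall_xor_mem_le hp0 hp4 hln (B h) (hB h hh)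
  exact hbound

/-- Random `(R, h)` lies in the critical set with high probability. Let `G ⊆ H` be the
robust functions, with `|H \ G| ≤ δ·|H|`, and for `h ∈ G` let each bad set
`B h i ⊆ {0,1}ⁿ` have size at most `p·2ⁿ` with `p ≤ 1/4` and `l ≥ n`. Then for uniform
independent `R ∈ ({0,1}ⁿ)^l` and `h ∈ H`, the probability that `h ∉ G` or that some
message `m` satisfies `m ⊕ R_i ∈ B h i` for every index `i` is at most `δ + 2^{-n}`. -/
theorem critical_set_probability
    (n l : ℕ) (hn : 0 < n) (hl : 0 < l) (hln : n ≤ l)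
    (p : ℝ) (hp0 : 0 ≤ p) (hp4 : p ≤ 1 / 4)
    {H : Type} [Fintype H] [DecidableEq H] [Nonempty H]
    (δ : ℝ) (hδ : 0 ≤ δ)
    (G : Finset H)
    (hG : ((Finset.univ \ G).card : ℝ) ≤ δ * (Fintype.card H : ℝ))
    (B : H → Fin l → Finset (Fin n → Bool))
    (hB : ∀ h ∈ G, ∀ i : Fin l, ((B h i).card : ℝ) ≤ p * 2 ^ n) :
    ((Finset.univ.filter
        (fun Rh : (Fin l → (Fin n → Bool)) × H =>
          Rh.2 ∉ G ∨
            ∃ m : Fin n → Bool, ∀ i : Fin l,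
              (fun j : Fin n => xor (m j) (Rh.1 i j)) ∈ B Rh.2 i)).card : ℝ) /
        (Fintype.card ((Fin l → (Fin n → Bool)) × H) : ℝ) ≤
      δ + ((2 : ℝ) ^ n)⁻¹ :=
  critical_set_probability_general n l hln p hp0 hp4 δ G hG B hB
end
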